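/- Let k ≥ 3 and let T be a finite tree having exactly one vertex c of degree k and all other vertices of degree at most 2 (a subdivided k-star). Let P be a set of vertices of T containing all leaves of T, with |P| ≥ 2. Then: (1) if c ∈ P, every discrete component of (T,P) has exactly 2 elements; (2) if c ∉ P, there is exactly one discrete component of (T,P) with more than 2 elements, and it has exactly k elements, namely, for each of the k connected components of T minus c it contains the point of P in that component closest to c. -/

import Mathlib

/-- `z` lies on the (unique, in a tree) path from `x` to `y`. -/
def OnPath {V : Type*} (G : SimpleGraph V) (x y z : V) : Prop :=
  ∃ p : G.Walk x y, p.IsPath ∧ z ∈ p.support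

/-- Two points of `P` are consecutive: no other point of `P` lies on the path between them. -/
def Consecutive {V : Type*} (G : SimpleGraph V) (P : Set V) (x y : V) : Prop :=
  x ∈ P ∧ y ∈ P ∧ x ≠ y ∧ ∀ z ∈ P, OnPath G x y z → z = x ∨ z = y

/-- A discrete component of the pointed tree `(G, P)`: a maximal subset of `P`
all of whose pairs of distinct points are consecutive. -/
def IsDiscreteComponent {V : Type*} (G : SimpleGraph V) (P : Set V) (C : Set V) : Prop :=
  C.Nonempty ∧ C ⊆ P ∧ (∀ x ∈ C, ∀ y ∈ C, x ≠ y → Consecutive G P x y) ∧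
    ∀ D : Set V, C ⊆ D → D ⊆ P →
      (∀ x ∈ D, ∀ y ∈ D, x ≠ y → Consecutive G P x y) → D = C

set_option linter.unusedSectionVars false

namespace StarAux
open SimpleGraph Walk

variable {V : Type*} [DecidableEq V] {G : SimpleGraph V}

noncomputable def tpath (hG : G.IsTree) (x y : V) : G.Walk x y :=
  (hG.existsUnique_path x y).choose

lemma tpath_isPath (hG : G.IsTree) (x y : V) : (tpath hG x y).IsPath :=
  (hG.existsUnique_path x y).choose_spec.1

lemma tpath_unique (hG : G.IsTree) {x y : V} (p : G.Walk x y) (hp : p.IsPath) :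
    p = tpath hG x y :=
  (hG.existsUnique_path x y).choose_spec.2 p hp

lemma tpath_symm (hG : G.IsTree) (x y : V) : tpath hG y x = (tpath hG x y).reverse :=
  (tpath_unique hG _ (tpath_isPath hG x y).reverse).symm

lemma mem_symm (hG : G.IsTree) {x y z : V} (h : z ∈ (tpath hG x y).support) :
    z ∈ (tpath hG y x).support := by
  rw [tpath_symm hG x y, Walk.support_reverse, List.mem_reverse]; exact h

lemma takeUntil_eq (hG : G.IsTree) {x y z : V} (h : z ∈ (tpath hG x y).support) :
    (tpath hG x y).takeUntil z h = tpath hG x z :=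
  tpath_unique hG _ ((tpath_isPath hG x y).takeUntil h)

lemma dropUntil_eq (hG : G.IsTree) {x y z : V} (h : z ∈ (tpath hG x y).support) :
    (tpath hG x y).dropUntil z h = tpath hG z y :=
  tpath_unique hG _ ((tpath_isPath hG x y).dropUntil h)

lemma tpath_split (hG : G.IsTree) {x y z : V} (h : z ∈ (tpath hG x y).support) :
    tpath hG x y = (tpath hG x z).append (tpath hG z y) := by
  rw [← takeUntil_eq hG h, ← dropUntil_eq hG h, Walk.take_spec]

lemma subset_left (hG : G.IsTree) {x y z : V} (h : z ∈ (tpath hG x y).support)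
    {w : V} (hw : w ∈ (tpath hG x z).support) : w ∈ (tpath hG x y).support := by
  rw [tpath_split hG h]; exact Walk.subset_support_append_left _ _ hw

lemma subset_right (hG : G.IsTree) {x y z : V} (h : z ∈ (tpath hG x y).support)
    {w : V} (hw : w ∈ (tpath hG z y).support) : w ∈ (tpath hG x y).support := by
  rw [tpath_split hG h]; exact Walk.subset_support_append_right _ _ hw

lemma split_mem (hG : G.IsTree) {x y z : V} (h : z ∈ (tpath hG x y).support)
    {w : V} (hw : w ∈ (tpath hG x y).support) :
    w ∈ (tpath hG x z).support ∨ w ∈ (tpath hG z y).support := by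
  rw [tpath_split hG h, Walk.mem_support_append_iff] at hw; exact hw

lemma between_antisymm (hG : G.IsTree) {x y z : V} (h1 : z ∈ (tpath hG x y).support)
    (h2 : y ∈ (tpath hG x z).support) : z = y := by
  have l1 := congrArg Walk.length (tpath_split hG h1)
  have l2 := congrArg Walk.length (tpath_split hG h2)
  rw [Walk.length_append] at l1 l2
  have l3 : (tpath hG y z).length = (tpath hG z y).length := by
    rw [tpath_symm hG z y, Walk.length_reverse]
  exact Walk.eq_of_length_eq_zero (p := tpath hG z y) (by omega)

lemma exists_first {x y : V} (p : G.Walk x y) (S : Set V) (hy : y ∈ S) :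
    ∃ (m : V) (q : G.Walk x m) (r : G.Walk m y),
      p = q.append r ∧ m ∈ S ∧ ∀ w ∈ q.support, w ∈ S → w = m := by
  induction p with
  | nil => exact ⟨_, Walk.nil, Walk.nil, rfl, hy, fun w hw _ => by simpa using hw⟩
  | @cons x b y h p ih =>
    by_cases hx : x ∈ S
    · exact ⟨x, Walk.nil, Walk.cons h p, rfl, hx, by simp⟩
    · obtain ⟨m, q, r, hqr, hm, hmin⟩ := ih hy
      refine ⟨m, Walk.cons h q, r, by rw [Walk.cons_append, hqr], hm, ?_⟩
      intro w hw hwS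
      rcases (by simpa using hw : w = x ∨ w ∈ q.support) with rfl | hw'
      · exact absurd hwS hx
      · exact hmin w hw' hwS


noncomputable def dir (hG : G.IsTree) (x t : V) : V := (tpath hG x t).getVert 1

lemma tpath_cons (hG : G.IsTree) {x t : V} (hxt : x ≠ t) :
    ∃ (b : V) (h : G.Adj x b) (q : G.Walk b t),
      tpath hG x t = Walk.cons h q ∧ b = dir hG x t := by
  obtain ⟨b, h, q, hq⟩ := Walk.not_nil_iff.mp (Walk.not_nil_of_ne hxt)
  exact ⟨b, h, q, hq, by simp [dir, hq]⟩

lemma dir_adj (hG : G.IsTree) {x t : V} (hxt : x ≠ t) : G.Adj x (dir hG x t) := by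
  obtain ⟨b, h, q, hq, hb⟩ := tpath_cons hG hxt
  exact hb ▸ h

lemma dir_mem (hG : G.IsTree) {x t : V} (hxt : x ≠ t) :
    dir hG x t ∈ (tpath hG x t).support := by
  obtain ⟨b, h, q, hq, hb⟩ := tpath_cons hG hxt
  rw [← hb, hq]
  simp

lemma dir_ne (hG : G.IsTree) {x t : V} (hxt : x ≠ t) : dir hG x t ≠ x := by
  obtain ⟨b, h, q, hq, hb⟩ := tpath_cons hG hxt
  have hp := tpath_isPath hG x t
  rw [hq] at hp
  rw [← hb]
  intro hbx
  rw [Walk.cons_isPath_iff] at hp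
  exact hp.2 (hbx ▸ q.start_mem_support)

lemma dir_eq_of_adj (hG : G.IsTree) {x w : V} (h : G.Adj x w) : dir hG x w = w := by
  have hp : (Walk.cons h Walk.nil : G.Walk x w).IsPath := by
    simp [Walk.isPath_def, h.ne]
  rw [dir, ← tpath_unique hG _ hp]
  simp

lemma dir_ne_dir (hG : G.IsTree) {x y m : V} (hm : m ∈ (tpath hG x y).support)
    (hmx : m ≠ x) (hmy : m ≠ y) : dir hG m x ≠ dir hG m y := by
  intro heq
  have h1 : dir hG m x ∈ (tpath hG x m).support :=
    mem_symm hG (dir_mem hG hmx)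
  have h2 : dir hG m y ∈ (tpath hG m y).support := dir_mem hG hmy
  have hnx : dir hG m x ≠ m := dir_ne hG hmx
  have hp := tpath_isPath hG x y
  rw [tpath_split hG hm, Walk.isPath_def, Walk.support_append] at hp
  have h2' : dir hG m y ∈ (tpath hG m y).support.tail := by
    have := (tpath hG m y).support_eq_cons
    rw [this] at h2
    rcases List.mem_cons.mp h2 with h2 | h2
    · exact absurd (heq.trans h2) hnx
    · exact h2
  exact (List.disjoint_of_nodup_append hp) h1 (heq ▸ h2')

lemma dir_eq_dir (hG : G.IsTree) {x y z : V} (hz : z ∈ (tpath hG x y).support)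
    (hzx : z ≠ x) : dir hG x z = dir hG x y := by
  obtain ⟨b, h, q, hq, hb⟩ := tpath_cons hG (Ne.symm hzx)
  have hsplit := tpath_split hG hz
  rw [hq, Walk.cons_append] at hsplit
  rw [← hb, dir, hsplit]
  simp

lemma median (hG : G.IsTree) (x y z : V) :
    ∃ m, m ∈ (tpath hG x y).support ∧ m ∈ (tpath hG x z).support ∧
      m ∈ (tpath hG y z).support := by
  obtain ⟨m, q, r, hqr, hm, hmin⟩ :=
    exists_first (tpath hG z x) {v | v ∈ (tpath hG x y).support}
      ((tpath hG x y).start_mem_support)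
  have hq : q.IsPath := by
    have := tpath_isPath hG z x
    rw [hqr] at this
    exact this.of_append_left
  have hmzx : m ∈ (tpath hG z x).support := by
    rw [hqr]
    exact Walk.subset_support_append_left _ _ q.end_mem_support
  have hmy : (tpath hG m y).support ⊆ (tpath hG x y).support :=
    fun w hw => subset_right hG hm hw
  have happ : (q.append (tpath hG m y)).IsPath := by
    rw [Walk.isPath_def, Walk.support_append]
    refine List.Nodup.append hq.support_nodup
      ((tpath_isPath hG m y).support_nodup.tail) ?_
    intro a haq hat
    have hat' : a ∈ (tpath hG m y).support.tail := hat
    have hnodup := (tpath_isPath hG m y).support_nodup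
    rw [(tpath hG m y).support_eq_cons] at hnodup
    have ham : a ≠ m := fun h => (List.nodup_cons.mp hnodup).1 (h ▸ hat')
    have : a ∈ (tpath hG m y).support := by
      rw [(tpath hG m y).support_eq_cons]; exact List.mem_cons_of_mem _ hat'
    exact ham (hmin a haq (hmy this))
  have hzy : q.append (tpath hG m y) = tpath hG z y := tpath_unique hG _ happ
  refine ⟨m, hm, mem_symm hG hmzx, mem_symm hG ?_⟩
  rw [← hzy]
  exact Walk.subset_support_append_left _ _ q.end_mem_support


section Deg
variable [Fintype V] [DecidableRel G.Adj] {c : V}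

lemma median_c (hG : G.IsTree) (hdeg : ∀ v : V, v ≠ c → G.degree v ≤ 2) {x y z m : V}
    (h1 : m ∈ (tpath hG x y).support) (h2 : m ∈ (tpath hG x z).support)
    (h3 : m ∈ (tpath hG y z).support)
    (hx : m ≠ x) (hy : m ≠ y) (hz : m ≠ z) : m = c := by
  by_contra hmc
  have d1 := dir_ne_dir hG h1 hx hy
  have d2 := dir_ne_dir hG h2 hx hz
  have d3 := dir_ne_dir hG h3 hy hz
  have hsub : ({dir hG m x, dir hG m y, dir hG m z} : Finset V) ⊆ G.neighborFinset m := by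
    intro a ha
    rw [SimpleGraph.mem_neighborFinset]
    simp only [Finset.mem_insert, Finset.mem_singleton] at ha
    rcases ha with rfl | rfl | rfl
    · exact dir_adj hG hx
    · exact dir_adj hG hy
    · exact dir_adj hG hz
  have hcard : ({dir hG m x, dir hG m y, dir hG m z} : Finset V).card = 3 := by
    rw [Finset.card_insert_of_notMem (by simp [d1, d2]),
      Finset.card_insert_of_notMem (by simp [d3]), Finset.card_singleton]
  have hle := Finset.card_le_card hsub
  rw [hcard, SimpleGraph.card_neighborFinset_eq_degree] at hle
  have := hdeg m hmc
  omega

lemma c_mem_of_dir_ne (hG : G.IsTree) (hdeg : ∀ v : V, v ≠ c → G.degree v ≤ 2) {x y : V}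
    (hx : x ≠ c) (hy : y ≠ c) (hd : dir hG c x ≠ dir hG c y) :
    c ∈ (tpath hG x y).support := by
  obtain ⟨m, m1, m2, m3⟩ := median hG x y c
  by_cases hmx : m = x
  · subst hmx
    exact absurd (dir_eq_dir hG (mem_symm hG m3) hx) hd
  by_cases hmy : m = y
  · subst hmy
    exact absurd (dir_eq_dir hG (mem_symm hG m2) hy).symm hd
  by_cases hmc : m = c
  · exact hmc ▸ m1
  · exact absurd (median_c hG hdeg m1 m2 m3 hmx hmy hmc) hmc

lemma linear (hG : G.IsTree) (hdeg : ∀ v : V, v ≠ c → G.degree v ≤ 2) {y z : V}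
    (hy : y ≠ c) (hz : z ≠ c) (hd : dir hG c y = dir hG c z) :
    y ∈ (tpath hG c z).support ∨ z ∈ (tpath hG c y).support := by
  obtain ⟨m, m1, m2, m3⟩ := median hG c y z
  by_cases hmy : m = y
  · exact Or.inl (hmy ▸ m2)
  by_cases hmz : m = z
  · exact Or.inr (hmz ▸ m1)
  have hmc : m = c := by
    by_cases hmc : m = c
    · exact hmc
    · exact median_c hG hdeg m1 m2 m3 hmc hmy hmz
  subst hmc
  exact absurd hd (dir_ne_dir hG m3 (Ne.symm hy) (Ne.symm hz))

lemma exists_leaf_branch (hG : G.IsTree) (hdeg : ∀ v : V, v ≠ c → G.degree v ≤ 2)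
    {b : V} (hb : G.Adj c b) :
    ∃ x : V, x ≠ c ∧ dir hG c x = b ∧ G.degree x = 1 := by
  classical
  let S : Finset V := Finset.univ.filter (fun v => v ≠ c ∧ dir hG c v = b)
  have hbS : b ∈ S := by
    simp only [S, Finset.mem_filter, Finset.mem_univ, true_and]
    exact ⟨hb.ne', dir_eq_of_adj hG hb⟩
  obtain ⟨x, hxS, hmax⟩ := S.exists_max_image (fun v => (tpath hG c v).length) ⟨b, hbS⟩
  simp only [S, Finset.mem_filter, Finset.mem_univ, true_and] at hxS
  obtain ⟨hxc, hxb⟩ := hxS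
  refine ⟨x, hxc, hxb, ?_⟩
  have hN : G.neighborFinset x = {dir hG x c} := by
    apply Finset.Subset.antisymm
    · intro w hw
      rw [SimpleGraph.mem_neighborFinset] at hw
      rw [Finset.mem_singleton]
      by_cases hwm : w ∈ (tpath hG c x).support
      · have hwx : w ≠ x := hw.ne'
        have : dir hG x w = dir hG x c :=
          dir_eq_dir hG (mem_symm hG hwm) (Ne.symm hw.ne)
        rw [dir_eq_of_adj hG hw] at this
        exact this
      · exfalso
        have hwc : w ≠ c := fun h => hwm (h ▸ (tpath hG c x).start_mem_support)
        have hp' : ((tpath hG c x).append (Walk.cons hw Walk.nil)).IsPath := by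
          rw [Walk.isPath_def, Walk.support_append]
          simp only [Walk.support_cons, Walk.support_nil, List.tail_cons]
          rw [List.nodup_append]
          refine ⟨(tpath_isPath hG c x).support_nodup, List.nodup_singleton _, ?_⟩
          intro a ha b hb hab
          rw [List.mem_singleton] at hb
          exact hwm (by rw [← hb, ← hab]; exact ha)
        have heq : (tpath hG c x).append (Walk.cons hw Walk.nil) = tpath hG c w :=
          tpath_unique hG _ hp'
        have hxmem : x ∈ (tpath hG c w).support := by
          rw [← heq]
          exact Walk.subset_support_append_left _ _ (tpath hG c x).end_mem_support
        have hdir : dir hG c w = b := by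
          rw [← dir_eq_dir hG hxmem hxc, hxb]
        have hwS : w ∈ S := by
          simp only [S, Finset.mem_filter, Finset.mem_univ, true_and]
          exact ⟨hwc, hdir⟩
        have hlen := hmax w hwS
        have : (tpath hG c w).length = (tpath hG c x).length + 1 := by
          rw [← heq, Walk.length_append]
          simp
        simp only [this] at hlen
        omega
    · intro w hw
      rw [Finset.mem_singleton] at hw
      rw [SimpleGraph.mem_neighborFinset, hw]
      exact dir_adj hG hxc
  rw [← SimpleGraph.card_neighborFinset_eq_degree, hN, Finset.card_singleton]

end Deg

lemma exists_closest (hG : G.IsTree) {P : Set V} {x : V} (hx : x ∈ P) (c : V) :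
    ∃ m ∈ P, m ∈ (tpath hG c x).support ∧
      ∀ q ∈ P, q ∈ (tpath hG c m).support → q = m := by
  obtain ⟨m, q, r, hqr, hm, hmin⟩ := exists_first (tpath hG c x) P hx
  have hq : q.IsPath := by
    have := tpath_isPath hG c x
    rw [hqr] at this
    exact this.of_append_left
  have hq' : q = tpath hG c m := tpath_unique hG q hq
  refine ⟨m, hm, ?_, ?_⟩
  · rw [hqr]
    exact Walk.subset_support_append_left _ _ q.end_mem_support
  · intro a haP hmem
    exact hmin a (by rwa [hq']) haP

lemma onPath_iff (hG : G.IsTree) {x y z : V} :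
    OnPath G x y z ↔ z ∈ (tpath hG x y).support := by
  constructor
  · rintro ⟨p, hp, hz⟩
    rwa [tpath_unique hG p hp] at hz
  · intro h
    exact ⟨tpath hG x y, tpath_isPath hG x y, h⟩

lemma onPath_symm {x y z : V} (h : OnPath G x y z) : OnPath G y x z := by
  obtain ⟨p, hp, hz⟩ := h
  exact ⟨p.reverse, hp.reverse, by simpa using hz⟩

lemma consecutive_symm {P : Set V} {x y : V} (h : Consecutive G P x y) :
    Consecutive G P y x :=
  ⟨h.2.1, h.1, h.2.2.1.symm, fun z hz ho => (h.2.2.2 z hz (onPath_symm ho)).symm⟩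

end StarAux


open StarAux SimpleGraph

theorem subdivided_star_components {V : Type*} [Fintype V] [DecidableEq V]
    (G : SimpleGraph V) [DecidableRel G.Adj] (hG : G.IsTree)
    (k : ℕ) (hk : 3 ≤ k) (c : V) (hc : G.degree c = k)
    (hdeg : ∀ v : V, v ≠ c → G.degree v ≤ 2)
    (P : Set V) (hleaves : ∀ v : V, G.degree v = 1 → v ∈ P) (hP2 : 2 ≤ P.ncard) :
    (c ∈ P → ∀ C : Set V, IsDiscreteComponent G P C → C.ncard = 2) ∧
    (c ∉ P →
      (∃! C : Set V, IsDiscreteComponent G P C ∧ 2 < C.ncard) ∧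
      ∀ C : Set V, IsDiscreteComponent G P C → 2 < C.ncard →
        C.ncard = k ∧ C = {p | p ∈ P ∧ ∀ q ∈ P, OnPath G c p q → q = p}) := by
  classical
  constructor
  · -- Case 1 : c ∈ P
    intro hcP C hC
    obtain ⟨hne, hCP, hcons, hmax⟩ := hC
    have hle : ¬ 2 < C.ncard := by
      intro h2
      obtain ⟨x, hx, y, hy, z, hz, hxy, hxz, hyz⟩ := (Set.two_lt_ncard C.toFinite).mp h2
      obtain ⟨m, m1, m2, m3⟩ := median hG x y z
      by_cases hmx : m = x
      · subst hmx
        rcases (hcons y hy z hz hyz).2.2.2 m (hCP hx) ((onPath_iff hG).mpr m3) with h | h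
        · exact hxy h
        · exact hxz h
      by_cases hmy : m = y
      · subst hmy
        rcases (hcons x hx z hz hxz).2.2.2 m (hCP hy) ((onPath_iff hG).mpr m2) with h | h
        · exact hxy h.symm
        · exact hyz h
      by_cases hmz : m = z
      · subst hmz
        rcases (hcons x hx y hy hxy).2.2.2 m (hCP hz) ((onPath_iff hG).mpr m1) with h | h
        · exact hxz h.symm
        · exact hyz h.symm
      have hmc := median_c hG hdeg m1 m2 m3 hmx hmy hmz
      subst hmc
      rcases (hcons x hx y hy hxy).2.2.2 m hcP ((onPath_iff hG).mpr m1) with h | h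
      · exact hmx h
      · exact hmy h
    have hnot1 : C.ncard ≠ 1 := by
      intro h1
      obtain ⟨x, rfl⟩ := Set.ncard_eq_one.mp h1
      have hxP : x ∈ P := hCP rfl
      obtain ⟨y, hyP, hyx⟩ := Set.exists_ne_of_one_lt_ncard (by omega : 1 < P.ncard) x
      let F : Finset V := Finset.univ.filter (fun v => v ∈ P ∧ v ≠ x)
      have hyF : y ∈ F := by simp [F, hyP, hyx]
      obtain ⟨y0, hy0F, hmin⟩ := F.exists_min_image (fun v => (tpath hG x v).length) ⟨y, hyF⟩
      simp only [F, Finset.mem_filter, Finset.mem_univ, true_and] at hy0F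
      obtain ⟨hy0P, hy0x⟩ := hy0F
      have hconsxy : Consecutive G P x y0 := by
        refine ⟨hxP, hy0P, Ne.symm hy0x, ?_⟩
        intro z hzP hzO
        by_cases hzx : z = x
        · exact Or.inl hzx
        right
        have hzF : z ∈ F := by simp [F, hzP, hzx]
        have hlen := hmin z hzF
        have hzsup := (onPath_iff hG).mp hzO
        have hsplit := congrArg Walk.length (tpath_split hG hzsup)
        rw [Walk.length_append] at hsplit
        exact Walk.eq_of_length_eq_zero (p := tpath hG z y0) (by omega)
      have hD := hmax {x, y0} (by simp) ?_ ?_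
      · have hy0mem : y0 ∈ ({x, y0} : Set V) := by simp
        rw [hD] at hy0mem
        exact hy0x (by simpa using hy0mem)
      · intro a ha
        rcases ha with rfl | ha
        · exact hxP
        · simpa using ha ▸ hy0P
      · intro a ha b hb hab
        rcases ha with rfl | ha <;> rcases hb with rfl | hb
        · exact absurd rfl hab
        · have : b = y0 := by simpa using hb
          subst this; exact hconsxy
        · have : a = y0 := by simpa using ha
          subst this; exact consecutive_symm hconsxy
        · have ha' : a = y0 := by simpa using ha
          have hb' : b = y0 := by simpa using hb
          exact absurd (ha'.trans hb'.symm) hab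
    have hpos : 0 < C.ncard := (Set.ncard_pos C.toFinite).mpr hne
    omega
  · -- Case 2 : c ∉ P
    intro hcP
    set Q : Set V := {p | p ∈ P ∧ ∀ q ∈ P, OnPath G c p q → q = p} with hQdef
    have hQP : Q ⊆ P := fun p hp => hp.1
    have hPc : ∀ p ∈ P, p ≠ c := fun p hp h => hcP (h ▸ hp)
    have memQ : ∀ p, p ∈ Q ↔ p ∈ P ∧ ∀ q ∈ P, q ∈ (tpath hG c p).support → q = p := by
      intro p
      simp only [hQdef, Set.mem_setOf_eq]
      constructor
      · exact fun ⟨h1, h2⟩ => ⟨h1, fun q hq hm => h2 q hq ((onPath_iff hG).mpr hm)⟩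
      · exact fun ⟨h1, h2⟩ => ⟨h1, fun q hq hm => h2 q hq ((onPath_iff hG).mp hm)⟩
    have hinj : ∀ p ∈ Q, ∀ q ∈ Q, dir hG c p = dir hG c q → p = q := by
      intro p hp q hq hd
      by_contra hpq
      rcases linear hG hdeg (hPc p (hQP hp)) (hPc q (hQP hq)) hd with h | h
      · exact hpq (((memQ q).mp hq).2 p (hQP hp) h)
      · exact hpq ((((memQ p).mp hp).2 q (hQP hq) h).symm)
    have hQcons : ∀ p ∈ Q, ∀ q ∈ Q, p ≠ q → Consecutive G P p q := by
      intro p hp q hq hpq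
      have hdp : dir hG c p ≠ dir hG c q := fun h => hpq (hinj p hp q hq h)
      have hcm : c ∈ (tpath hG p q).support :=
        c_mem_of_dir_ne hG hdeg (hPc p (hQP hp)) (hPc q (hQP hq)) hdp
      refine ⟨hQP hp, hQP hq, hpq, ?_⟩
      intro z hzP hzO
      have hz := (onPath_iff hG).mp hzO
      rcases split_mem hG hcm hz with h | h
      · exact Or.inl (((memQ p).mp hp).2 z hzP (mem_symm hG h))
      · exact Or.inr (((memQ q).mp hq).2 z hzP h)
    have hclosest : ∀ x ∈ P, ∃ m ∈ Q, m ∈ (tpath hG c x).support := by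
      intro x hx
      obtain ⟨m, hmP, hmsup, hmprop⟩ := exists_closest hG hx c
      exact ⟨m, (memQ m).mpr ⟨hmP, hmprop⟩, hmsup⟩
    have himg : dir hG c '' Q = ↑(G.neighborFinset c) := by
      ext b
      simp only [Set.mem_image, Finset.mem_coe, SimpleGraph.mem_neighborFinset]
      constructor
      · rintro ⟨p, hp, rfl⟩
        exact dir_adj hG (Ne.symm (hPc p (hQP hp)))
      · intro hb
        obtain ⟨x, hxc, hxb, hxdeg⟩ := exists_leaf_branch hG hdeg hb
        have hxP : x ∈ P := hleaves x hxdeg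
        obtain ⟨m, hmQ, hmsup⟩ := hclosest x hxP
        refine ⟨m, hmQ, ?_⟩
        rw [dir_eq_dir hG hmsup (hPc m (hQP hmQ)), hxb]
    have hQcard : Q.ncard = k := by
      have h1 : (dir hG c '' Q).ncard = Q.ncard :=
        Set.ncard_image_of_injOn (fun p hp q hq => hinj p hp q hq)
      rw [← h1, himg, Set.ncard_coe_finset, SimpleGraph.card_neighborFinset_eq_degree, hc]
    have hQmax : ∀ D : Set V, Q ⊆ D → D ⊆ P →
        (∀ x ∈ D, ∀ y ∈ D, x ≠ y → Consecutive G P x y) → D = Q := by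
      intro D hQD hDP hDcons
      refine Set.Subset.antisymm ?_ hQD
      intro x hxD
      obtain ⟨m, hmQ, hmsup⟩ := hclosest x (hDP hxD)
      by_cases hmx : m = x
      · exact hmx ▸ hmQ
      exfalso
      obtain ⟨q, hqQ, hqm⟩ :=
        Set.exists_ne_of_one_lt_ncard (by rw [hQcard]; omega : 1 < Q.ncard) m
      have hdq : dir hG c q ≠ dir hG c m := fun h => hqm (hinj q hqQ m hmQ h)
      have hdx : dir hG c m = dir hG c x := dir_eq_dir hG hmsup (hPc m (hQP hmQ))
      have hxq : x ≠ q := by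
        intro h; subst h; exact hdq hdx.symm
      have hcm : c ∈ (tpath hG x q).support :=
        c_mem_of_dir_ne hG hdeg (hPc x (hDP hxD)) (hPc q (hQP hqQ))
          (fun h => hdq (h.symm.trans hdx.symm))
      have hmmem : m ∈ (tpath hG x q).support := subset_left hG hcm (mem_symm hG hmsup)
      rcases (hDcons x hxD q (hQD hqQ) hxq).2.2.2 m (hQP hmQ) ((onPath_iff hG).mpr hmmem) with h | h
      · exact hmx h
      · exact hqm h.symm
    have hQne : Q.Nonempty := Set.nonempty_of_ncard_ne_zero (by rw [hQcard]; omega)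
    have hQcomp : IsDiscreteComponent G P Q := ⟨hQne, hQP, hQcons, hQmax⟩
    have huniq : ∀ C : Set V, IsDiscreteComponent G P C → 2 < C.ncard → C = Q := by
      intro C hC h2
      obtain ⟨hne, hCP, hcons, hmax⟩ := hC
      have hkey : ∀ u ∈ C, ∀ v ∈ C, u ≠ v → u ∈ (tpath hG c v).support → False := by
        intro u hu v hv huv hmem
        have hthird : ∃ w ∈ C, w ≠ u ∧ w ≠ v := by
          have hCuv : ¬ C ⊆ {u, v} := by
            intro hsub
            have hle := Set.ncard_le_ncard hsub (Set.toFinite _)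
            rw [Set.ncard_pair huv] at hle
            omega
          obtain ⟨w, hwC, hw⟩ := Set.not_subset.mp hCuv
          simp only [Set.mem_insert_iff, Set.mem_singleton_iff, not_or] at hw
          exact ⟨w, hwC, hw.1, hw.2⟩
        obtain ⟨w, hwC, hwu, hwv⟩ := hthird
        have hvc := hPc v (hCP hv)
        have huc := hPc u (hCP hu)
        have hwc := hPc w (hCP hwC)
        have hduv : dir hG c u = dir hG c v := dir_eq_dir hG hmem huc
        by_cases hdw : dir hG c w = dir hG c u
        · rcases linear hG hdeg hwc hvc (hdw.trans hduv) with hwv' | hvw'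
          · rcases split_mem hG hmem hwv' with h | h
            · by_cases huw : u ∈ (tpath hG c w).support
              · exact hwu (between_antisymm hG h huw)
              · rcases split_mem hG hwv' hmem with h' | h'
                · exact huw h'
                · rcases (hcons w hwC v hv hwv).2.2.2 u (hCP hu)
                    ((onPath_iff hG).mpr h') with h'' | h''
                  · exact hwu h''.symm
                  · exact huv h''
            · rcases (hcons u hu v hv huv).2.2.2 w (hCP hwC)
                ((onPath_iff hG).mpr h) with h'' | h''
              · exact hwu h''
              · exact hwv h''
          · have humem : u ∈ (tpath hG c w).support := subset_left hG hvw' hmem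
            rcases split_mem hG humem hvw' with h | h
            · exact huv (between_antisymm hG hmem h)
            · rcases (hcons u hu w hwC (Ne.symm hwu)).2.2.2 v (hCP hv)
                ((onPath_iff hG).mpr h) with h'' | h''
              · exact huv h''.symm
              · exact hwv h''.symm
        · have hcm : c ∈ (tpath hG v w).support :=
            c_mem_of_dir_ne hG hdeg hvc hwc (fun h => hdw (hduv.trans h).symm)
          have humem : u ∈ (tpath hG v w).support := subset_left hG hcm (mem_symm hG hmem)
          rcases (hcons v hv w hwC (Ne.symm hwv)).2.2.2 u (hCP hu)
            ((onPath_iff hG).mpr humem) with h | h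
          · exact huv h
          · exact hwu h.symm
      have hCQ : C ⊆ Q := by
        intro x hxC
        obtain ⟨y, hyC, hyx⟩ :=
          Set.exists_ne_of_one_lt_ncard (by omega : 1 < C.ncard) x
        refine (memQ x).mpr ⟨hCP hxC, ?_⟩
        intro q hqP hqmem
        by_cases hqx : q = x
        · exact hqx
        exfalso
        have hdxy : dir hG c x ≠ dir hG c y := by
          intro h
          rcases linear hG hdeg (hPc x (hCP hxC)) (hPc y (hCP hyC)) h with h' | h'
          · exact hkey x hxC y hyC (Ne.symm hyx) h'
          · exact hkey y hyC x hxC hyx h'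
        have hcm : c ∈ (tpath hG x y).support :=
          c_mem_of_dir_ne hG hdeg (hPc x (hCP hxC)) (hPc y (hCP hyC)) hdxy
        have hqmem' : q ∈ (tpath hG x y).support := subset_left hG hcm (mem_symm hG hqmem)
        rcases (hcons x hxC y hyC (Ne.symm hyx)).2.2.2 q hqP
          ((onPath_iff hG).mpr hqmem') with h | h
        · exact hqx h
        · subst h
          exact hdxy (dir_eq_dir hG hqmem (hPc q hqP)).symm
      exact (hmax Q hCQ hQP hQcons).symm
    refine ⟨⟨Q, ⟨hQcomp, by rw [hQcard]; omega⟩, fun C hC => huniq C hC.1 hC.2⟩, ?_⟩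
    intro C hC h2
    have hCQ := huniq C hC h2
    exact ⟨by rw [hCQ, hQcard], hCQ⟩
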